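/- arXiv:1508.05597 — 2 statements merged into one kernel-verified Lean document; each statement's English description precedes it below -/
import Mathlib

section
/- Suppose 1 < p < q, q > 2, and let α₁, β₁, γ > 0. Define for (X, Y, Z) with X > 0: F(X,Y,Z) = -(q-4)X^(q-2)Z - (q-2)X^q Z - 8α₁X^p YZ + 8α₁γX^q YZ + 2M YZ - 4Mα₁X^(p-2)Z + (4Mα₁γ - q + 4)X^(q-2)Z - 4α₁X^p Z + 4α₁γX^q Z - 8(β₁X^p + β₁γX^q)Y² - 4M(β₁X^p + β₁γX^q)Z² - 4(β₁X^p + β₁γX^q)Y + 4X⁻²Z, and H(X,Y,Z) = X^(q-4) + X^(q-2) + Y² + MZ² + Y + X⁻⁴ + M. Then there exist constants M > 0 and M₁ > 0 such that F(X,Y,Z) ≤ M₁ H(X,Y,Z) for all X > 0, Z ∈ ℝ, and Y ≥ X²Z². -/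
/-!
Take `M = 1` and write `a = X^p`, `b = X^q`, `w = X^(-2)`, so that `X^(q-2) = b w`,
`X^(q-4) = b w²`, `X^(-4) = w²`, `a ≤ b + 1`, and the constraint `Y ≥ X² Z²` reads `Z² ≤ Y w`.
Then `F = L Z - β₁ (a + γ b)(8Y² + 4Z² + 4Y)` with `|L| ≤ C (1 + a + b)(1 + w + Y)`.
AM–GM gives `|Z| ≤ (εY + w/ε)/2`, hence `(1 + w + Y)|Z| ≤ ε (Y² + Y) + K (w + w²)`.
With `ε = β₁ min(1, γ) / C` the part of `C ε (1 + a + b)(Y² + Y)` carrying `a + b` is absorbed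
by the damping term, and everything left is bounded by a multiple of `H`.
-/

open Real

lemma abs_le_of_sq_le_mul {t Y w Z : ℝ} (ht : 0 < t) (hY : 0 ≤ Y) (hw : 0 ≤ w)
    (h : Z ^ 2 ≤ Y * w) : |Z| ≤ (t * Y + w / t) / 2 := by
  refine abs_le_of_sq_le_sq ?_ (by positivity)
  have hYw : Y * w = t * Y * (w / t) := by field_simp
  nlinarith [sq_nonneg (t * Y - w / t)]

lemma exists_mul_abs_le_of_sq_le_mul {ε : ℝ} (hε : 0 < ε) :
    ∃ K > 0, ∀ Y w Z : ℝ, 0 ≤ Y → 0 ≤ w → Z ^ 2 ≤ Y * w →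
      (1 + w + Y) * |Z| ≤ ε * (Y ^ 2 + Y) + K * (w + w ^ 2) := by
  obtain ⟨A, hA⟩ : ∃ A, A = (ε + 1 / ε) / 2 := ⟨_, rfl⟩
  refine ⟨(1 + A ^ 2) / (2 * ε), by positivity, fun Y w Z hY hw h => ?_⟩
  have hZ := mul_le_mul_of_nonneg_left (abs_le_of_sq_le_mul hε hY hw h)
    (by positivity : 0 ≤ 1 + w + Y)
  have hYw : A * (Y * w) ≤ ε / 2 * Y ^ 2 + A ^ 2 / (2 * ε) * w ^ 2 := by
    have hsq : ε / 2 * Y ^ 2 + A ^ 2 / (2 * ε) * w ^ 2 - A * (Y * w)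
        = (ε * Y - A * w) ^ 2 / (2 * ε) := by
      field_simp
      ring
    rw [← sub_nonneg, hsq]
    positivity
  have h1 : 0 ≤ ε * Y := by positivity
  have h2 : 0 ≤ A ^ 2 / (2 * ε) * w := by positivity
  linear_combination hZ + hYw + h1 / 2 + h2 - Y * w * hA

/-- The coefficient of `Z` in `F` for `M = 1`, in the variables `a = X^p`, `b = X^q`,
`w = X^(-2)`. -/
lemma abs_zCoeff_le {α γ q a b w Y : ℝ} (hα : 0 ≤ α) (hγ : 0 ≤ γ) (hq : 0 ≤ q)
    (ha : 0 ≤ a) (hb : 0 ≤ b) (hw : 0 ≤ w) (hY : 0 ≤ Y) :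
    |(8 - 2 * q + 4 * α * γ) * (b * w) + (4 * α * γ - q + 2) * b - 8 * α * (a * Y)
      + 8 * α * γ * (b * Y) + 2 * Y - 4 * α * (a * w) - 4 * α * a + 4 * w|
      ≤ (2 * q + 8 + 8 * α + 8 * α * γ) * ((1 + a + b) * (1 + w + Y)) := by
  have hαγ : 0 ≤ α * γ := mul_nonneg hα hγ
  have hbw := mul_nonneg hb hw
  have haY := mul_nonneg ha hY
  have hbY := mul_nonneg hb hY
  have haw := mul_nonneg ha hw
  rw [abs_le]
  constructor <;> nlinarith

lemma exists_mul_sub_le_of_abs_le {C β γ : ℝ} (hC : 0 < C) (hβ : 0 < β) (hγ : 0 < γ) :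
    ∃ M₁ > 0, ∀ a b w Y Z L : ℝ, 0 ≤ a → 0 ≤ b → 0 ≤ w → 0 ≤ Y → a ≤ b + 1 →
      Z ^ 2 ≤ Y * w → |L| ≤ C * ((1 + a + b) * (1 + w + Y)) →
      L * Z - β * (a + γ * b) * (Y ^ 2 + Y)
        ≤ M₁ * (b * w ^ 2 + b * w + Y ^ 2 + Y + w ^ 2 + 1) := by
  obtain ⟨μ, hμ1, hμγ, hμ⟩ : ∃ μ ≤ 1, μ ≤ γ ∧ 0 < μ :=
    ⟨min 1 γ, min_le_left _ _, min_le_right _ _, lt_min one_pos hγ⟩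
  obtain ⟨K, hK, hcross⟩ := exists_mul_abs_le_of_sq_le_mul (by positivity : 0 < β * μ / C)
  refine ⟨β * μ + 3 * (C * K), by positivity, fun a b w Y Z L ha hb hw hY hab hZ hL => ?_⟩
  have hLZ : L * Z
      ≤ β * μ * ((1 + a + b) * (Y ^ 2 + Y)) + C * K * ((1 + a + b) * (w + w ^ 2)) :=
    calc L * Z ≤ |L| * |Z| := by rw [← abs_mul]; exact le_abs_self _
      _ ≤ C * (1 + a + b) * ((1 + w + Y) * |Z|) :=
          (mul_le_mul_of_nonneg_right hL (abs_nonneg Z)).trans_eq (by ring)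
      _ ≤ C * (1 + a + b) * (β * μ / C * (Y ^ 2 + Y) + K * (w + w ^ 2)) :=
          mul_le_mul_of_nonneg_left (hcross Y w Z hY hw hZ) (by positivity)
      _ = _ := by field_simp
  have hdamp : β * μ * ((a + b) * (Y ^ 2 + Y)) ≤ β * (a + γ * b) * (Y ^ 2 + Y) := by
    have : μ * (a + b) ≤ a + γ * b := by nlinarith
    calc β * μ * ((a + b) * (Y ^ 2 + Y)) = β * (μ * (a + b)) * (Y ^ 2 + Y) := by ring
      _ ≤ β * (a + γ * b) * (Y ^ 2 + Y) := by gcongr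
  have hweight : (1 + a + b) * (w + w ^ 2) ≤ 3 * (b * w ^ 2 + b * w + w ^ 2 + 1) := by
    nlinarith [sq_nonneg (w - 1), mul_nonneg (sub_nonneg.2 hab) (add_nonneg hw (sq_nonneg w))]
  have h1 := mul_le_mul_of_nonneg_left hweight (by positivity : 0 ≤ C * K)
  have h2 : 0 ≤ β * μ * (b * w ^ 2 + b * w + w ^ 2 + 1) := by positivity
  have h3 : 0 ≤ C * K * (Y ^ 2 + Y) := by positivity
  linarith

lemma rpow_le_rpow_add_one {X p q : ℝ} (hX : 0 ≤ X) (hp : 0 ≤ p) (hpq : p ≤ q) :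
    X ^ p ≤ X ^ q + 1 := by
  rcases le_total X 1 with hX1 | hX1
  · linarith [rpow_le_one hX hX1 hp, rpow_nonneg hX q]
  · linarith [rpow_le_rpow_of_exponent_le hX1 hpq]

lemma rpow_sub_two {X : ℝ} (hX : 0 < X) (s : ℝ) : X ^ (s - 2) = X ^ s * X ^ (-2 : ℝ) := by
  rw [← rpow_add hX, sub_eq_add_neg]

lemma sq_le_mul_rpow_neg_two {X Y Z : ℝ} (hX : 0 < X) (h : X ^ 2 * Z ^ 2 ≤ Y) :
    Z ^ 2 ≤ Y * X ^ (-2 : ℝ) := by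
  rw [rpow_neg hX.le, rpow_two, ← div_eq_mul_inv, le_div_iff₀ (by positivity)]
  linarith

theorem stmt_10 (α₁ β₁ γ p q : ℝ) (hα : 0 < α₁) (hβ : 0 < β₁) (hγ : 0 < γ)
    (hp : 1 < p) (hpq : p < q) (hq : 2 < q) :
    ∃ M > (0 : ℝ), ∃ M₁ > (0 : ℝ), ∀ X Y Z : ℝ, 0 < X → Y ≥ X ^ 2 * Z ^ 2 →
      -(q - 4) * X ^ (q - 2) * Z - (q - 2) * X ^ q * Z
        - 8 * α₁ * X ^ p * Y * Z + 8 * α₁ * γ * X ^ q * Y * Z + 2 * M * Y * Z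
        - 4 * M * α₁ * X ^ (p - 2) * Z + (4 * M * α₁ * γ - q + 4) * X ^ (q - 2) * Z
        - 4 * α₁ * X ^ p * Z + 4 * α₁ * γ * X ^ q * Z
        - 8 * (β₁ * X ^ p + β₁ * γ * X ^ q) * Y ^ 2
        - 4 * M * (β₁ * X ^ p + β₁ * γ * X ^ q) * Z ^ 2
        - 4 * (β₁ * X ^ p + β₁ * γ * X ^ q) * Y + 4 * X ^ (-2 : ℝ) * Z
      ≤ M₁ * (X ^ (q - 4) + X ^ (q - 2) + Y ^ 2 + M * Z ^ 2 + Y + X ^ (-4 : ℝ) + M) := by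
  obtain ⟨M₁, hM₁, hest⟩ := exists_mul_sub_le_of_abs_le
    (by positivity : 0 < 2 * q + 8 + 8 * α₁ + 8 * α₁ * γ) hβ hγ
  refine ⟨1, one_pos, M₁, hM₁, fun X Y Z hX hYZ => ?_⟩
  have ha := rpow_nonneg hX.le p
  have hb := rpow_nonneg hX.le q
  have hw := rpow_nonneg hX.le (-2)
  have hY : 0 ≤ Y := le_trans (by positivity) hYZ
  have key := hest _ _ _ Y Z _ ha hb hw hY (rpow_le_rpow_add_one hX.le (by linarith) hpq.le)
    (sq_le_mul_rpow_neg_two hX hYZ) (abs_zCoeff_le hα.le hγ.le (by linarith) ha hb hw hY)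
  have hdamp : 0 ≤ (β₁ * X ^ p + β₁ * γ * X ^ q) * (7 * Y ^ 2 + 4 * Z ^ 2 + 3 * Y) := by
    positivity
  rw [show q - 4 = q - 2 - 2 by ring, show (-4 : ℝ) = -2 - 2 by norm_num,
    rpow_sub_two hX (q - 2), rpow_sub_two hX q, rpow_sub_two hX p, rpow_sub_two hX (-2)]
  linarith [mul_nonneg hM₁.le (sq_nonneg Z)]
end

section
/- Suppose 1 < p < q, q > 2, d > max{q-4, 2}, σ > 0, α₁, β₁, γ > 0, and θ satisfies max{q-6, 0} < θ < min{d-2, q-2}. Define f(X,Y,Z) = -θX^(θ+2)Z - 4α₁MX^(p-2)Z + 2α₁γMX^(q-2)Z - 8α₁X^p YZ + 8α₁γX^q YZ + 2MYZ + Mσ²Y + 4X⁻²Z + 2(d+2)σ²X⁻² - ((d-2-θ)θσ²/2)X^(θ+2) - 8(β₁X^p + β₁γX^q)Y² - 4M(β₁X^p + β₁γX^q)Z², and V(X,Y,Z) = X^θ + X⁻⁴ + Y² + MZ² + M. Then there exist M > 0 and M₂ > 0 such that f(X,Y,Z) ≤ M₂ V(X,Y,Z) for all X > 0, Z ∈ ℝ,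 and Y ≥ X²Z². -/
/-!
Each cross term of `f` is split by the weighted AM-GM inequality `K y z ≤ a z² + b y²`
(valid when `K² ≤ 4ab`) into a multiple of one of the damping terms `X^p Z²`, `X^q Z²`,
`X^p Y²`, `X^q Y²` plus a pure power of `X`. With `c = (d - 2 - θ) θ σ² / 2 > 0` and
`M ≥ 2α₁²/β₁² + θ²/(c β₁ γ)`, the damping `-8 P Y² - 4 M P Z²`, where
`P = β₁ X^p + β₁ γ X^q`, absorbs the former. The leftover powers `X^(p-4)` and `X^(q-4)`
have exponents in `[-4, θ + 2)` because `p < q < θ + 6`, so they are dominated by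
`c X^(θ+2)` for large `X` and by `X^(-4)` for small `X`. What remains is quadratic in
`X^(-2)`, `Y`, `Z`.
-/

open Real Filter Topology

lemma mul_mul_le_of_sq_le_four_mul {K a b y z : ℝ} (ha : 0 ≤ a) (hb : 0 ≤ b)
    (hK : K ^ 2 ≤ 4 * a * b) : K * y * z ≤ a * z ^ 2 + b * y ^ 2 := by
  rcases ha.eq_or_lt with rfl | ha
  · have hK0 : K = 0 := by nlinarith
    subst hK0
    nlinarith [sq_nonneg y]
  · nlinarith [sq_nonneg (2 * a * z - K * y), sq_nonneg y]

lemma mul_rpow_mul_mul_le {X K a b u v w Y Z : ℝ} (hX : 0 < X) (ha : 0 ≤ a) (hb : 0 ≤ b)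
    (hK : K ^ 2 ≤ 4 * a * b) (huvw : u + v = 2 * w) :
    K * X ^ w * Y * Z ≤ a * X ^ u * Z ^ 2 + b * X ^ v * Y ^ 2 := by
  have hsq : ∀ r : ℝ, X ^ r = (X ^ (r / 2)) ^ 2 := fun r => by
    rw [← rpow_natCast, ← rpow_mul hX.le]; norm_num
  have hw : X ^ w = X ^ (v / 2) * X ^ (u / 2) := by
    rw [← rpow_add hX]; congr 1; linarith
  calc K * X ^ w * Y * Z = K * (X ^ (v / 2) * Y) * (X ^ (u / 2) * Z) := by rw [hw]; ring
    _ ≤ a * (X ^ (u / 2) * Z) ^ 2 + b * (X ^ (v / 2) * Y) ^ 2 :=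
      mul_mul_le_of_sq_le_four_mul ha hb hK
    _ = a * X ^ u * Z ^ 2 + b * X ^ v * Y ^ 2 := by rw [hsq u, hsq v]; ring

lemma mul_rpow_mul_le {X K a b u v w Z : ℝ} (hX : 0 < X) (ha : 0 ≤ a) (hb : 0 ≤ b)
    (hK : K ^ 2 ≤ 4 * a * b) (huvw : u + v = 2 * w) :
    K * X ^ w * Z ≤ a * X ^ u * Z ^ 2 + b * X ^ v := by
  simpa using mul_rpow_mul_mul_le (Y := 1) hX ha hb hK huvw

lemma rpow_le_rpow_add_rpow {X a s b : ℝ} (hX : 0 < X) (has : a ≤ s) (hsb : s ≤ b) :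
    X ^ s ≤ X ^ a + X ^ b := by
  rcases le_total X 1 with h | h
  · linarith [rpow_le_rpow_of_exponent_ge hX h has, rpow_nonneg hX.le b]
  · linarith [rpow_le_rpow_of_exponent_le h hsb, rpow_nonneg hX.le a]

lemma exists_mul_rpow_le_add {K a s t ε : ℝ} (hK : 0 ≤ K) (has : a ≤ s) (hst : s < t)
    (hε : 0 < ε) : ∃ C, 0 ≤ C ∧ ∀ X > 0, K * X ^ s ≤ ε * X ^ t + C * (X ^ a + 1) := by
  have hlim : Tendsto (fun X : ℝ => K * X ^ (-(t - s))) atTop (𝓝 0) := by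
    simpa using (tendsto_rpow_neg_atTop (sub_pos.2 hst)).const_mul K
  obtain ⟨R, hR⟩ := eventually_atTop.1 (hlim.eventually (ge_mem_nhds hε))
  set R' := max R 1
  have hR'1 : 1 ≤ R' ^ max s 0 := one_le_rpow (le_max_right _ _) (le_max_right _ _)
  refine ⟨K * R' ^ max s 0, by positivity, fun X hX => ?_⟩
  have hXa := rpow_nonneg hX.le a
  have hXt := rpow_nonneg hX.le t
  have hC : K ≤ K * R' ^ max s 0 := le_mul_of_one_le_right hK hR'1
  rcases le_total X 1 with hX1 | hX1
  · have : X ^ s ≤ X ^ a := rpow_le_rpow_of_exponent_ge hX hX1 has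
    nlinarith
  rcases le_total X R' with hXR | hRX
  · have : X ^ s ≤ R' ^ max s 0 :=
      (rpow_le_rpow_of_exponent_le hX1 (le_max_left s 0)).trans
        (rpow_le_rpow hX.le hXR (le_max_right s 0))
    nlinarith
  · have hsplit : K * X ^ s = K * X ^ (-(t - s)) * X ^ t := by
      rw [mul_assoc, ← rpow_add hX]; ring_nf
    have hRX' := hR X ((le_max_left _ _).trans hRX)
    nlinarith

lemma damped_terms_le {α₁ β₁ γ θ p q c M X Y Z : ℝ} (hβ : 0 < β₁) (hγ : 0 < γ) (hc : 0 < c)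
    (hMα : 2 * α₁ ^ 2 ≤ M * β₁ ^ 2) (hMθ : θ ^ 2 ≤ M * (c * β₁ * γ)) (hθ : 0 ≤ θ + 2)
    (hθq : θ + 2 ≤ q) (hX : 0 < X) :
    -θ * X ^ (θ + 2) * Z - 4 * α₁ * M * X ^ (p - 2) * Z + 2 * α₁ * γ * M * X ^ (q - 2) * Z
        - 8 * α₁ * X ^ p * Y * Z + 8 * α₁ * γ * X ^ q * Y * Z
        - 8 * (β₁ * X ^ p + β₁ * γ * X ^ q) * Y ^ 2
        - 4 * M * (β₁ * X ^ p + β₁ * γ * X ^ q) * Z ^ 2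
      ≤ c / 4 * X ^ (θ + 2) + θ ^ 2 / c * Z ^ 2 + 4 * α₁ ^ 2 * M / β₁ * X ^ (p - 4)
        + α₁ ^ 2 * γ * M / β₁ * X ^ (q - 4) := by
  have hM : 0 ≤ M :=
    nonneg_of_mul_nonneg_left ((by positivity : (0 : ℝ) ≤ 2 * α₁ ^ 2).trans hMα)
      (by positivity : 0 < β₁ ^ 2)
  have hθZ := mul_rpow_mul_le hX (K := -θ) (a := θ ^ 2 / c) (b := c / 4)
    (u := θ + 2) (v := θ + 2) (w := θ + 2) (Z := Z)
    (by positivity) (by positivity) (le_of_eq (by field_simp)) (by ring)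
  have hpZ := mul_rpow_mul_le hX (K := -(4 * α₁ * M)) (a := M * β₁)
    (b := 4 * α₁ ^ 2 * M / β₁) (u := p) (v := p - 4) (w := p - 2) (Z := Z)
    (by positivity) (by positivity) (le_of_eq (by field_simp)) (by ring)
  have hqZ := mul_rpow_mul_le hX (K := 2 * α₁ * γ * M) (a := M * β₁ * γ)
    (b := α₁ ^ 2 * γ * M / β₁) (u := q) (v := q - 4) (w := q - 2) (Z := Z)
    (by positivity) (by positivity) (le_of_eq (by field_simp; ring)) (by ring)
  have hpYZ := mul_rpow_mul_mul_le hX (K := -(8 * α₁)) (a := 2 * α₁ ^ 2 / β₁)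
    (b := 8 * β₁) (u := p) (v := p) (w := p) (Y := Y) (Z := Z)
    (by positivity) (by positivity) (le_of_eq (by field_simp; ring)) (by ring)
  have hqYZ := mul_rpow_mul_mul_le hX (K := 8 * α₁ * γ) (a := 2 * α₁ ^ 2 * γ / β₁)
    (b := 8 * β₁ * γ) (u := q) (v := q) (w := q) (Y := Y) (Z := Z)
    (by positivity) (by positivity) (le_of_eq (by field_simp; ring)) (by ring)
  have hθ_le : X ^ (θ + 2) ≤ 1 + X ^ q := by
    simpa using rpow_le_rpow_add_rpow (a := 0) hX hθ hθq
  have hpZ2 : 0 ≤ X ^ p * Z ^ 2 := by positivity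
  have hqZ2 : 0 ≤ X ^ q * Z ^ 2 := by positivity
  have hcoef_p : 2 * α₁ ^ 2 / β₁ ≤ M * β₁ := by
    rw [div_le_iff₀ hβ]; nlinarith
  have hcoef_q : 2 * α₁ ^ 2 * γ / β₁ + θ ^ 2 / c ≤ 2 * (M * β₁ * γ) := by
    have hα_coef : 2 * α₁ ^ 2 * γ / β₁ ≤ M * β₁ * γ := by rw [div_le_iff₀ hβ]; nlinarith
    have hθ_coef : θ ^ 2 / c ≤ M * β₁ * γ := by rw [div_le_iff₀ hc]; nlinarith
    linarith
  have hθ_split := mul_le_mul_of_nonneg_left hθ_le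
    (mul_nonneg (by positivity : 0 ≤ θ ^ 2 / c) (sq_nonneg Z))
  have hslack_p : 0 ≤ M * β₁ * (X ^ p * Z ^ 2) := by positivity
  have hslack_q : 0 ≤ M * β₁ * γ * (X ^ q * Z ^ 2) := by positivity
  linarith [mul_le_mul_of_nonneg_right hcoef_p hpZ2, mul_le_mul_of_nonneg_right hcoef_q hqZ2]

lemma noise_terms_le {M σ d X Y Z : ℝ} (hM : 0 ≤ M) (hd : 0 ≤ d + 2) (hX : 0 < X) :
    2 * M * Y * Z + M * σ ^ 2 * Y + 4 * X ^ (-2 : ℝ) * Z + 2 * (d + 2) * σ ^ 2 * X ^ (-2 : ℝ)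
      ≤ (M + M * σ ^ 2 / 2 + 2 + (d + 2) * σ ^ 2) * (X ^ (-4 : ℝ) + Y ^ 2 + Z ^ 2 + 1) := by
  set W := X ^ (-4 : ℝ) + Y ^ 2 + Z ^ 2 + 1
  have hX4 : X ^ (-4 : ℝ) = (X ^ (-2 : ℝ)) ^ 2 := by
    rw [← rpow_natCast, ← rpow_mul hX.le]; norm_num
  have hW : ∀ a b : ℝ, a ^ 2 + b ^ 2 ≤ W → 2 * a * b ≤ W :=
    fun a b h => (two_mul_le_add_sq a b).trans h
  have h4 : 0 ≤ X ^ (-4 : ℝ) := rpow_nonneg hX.le _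
  have hYZ := hW Y Z (by linarith)
  have hY := hW Y 1 (by linarith [sq_nonneg Z])
  have hXZ := hW (X ^ (-2 : ℝ)) Z (by rw [← hX4]; linarith [sq_nonneg Y])
  have hX1 := hW (X ^ (-2 : ℝ)) 1 (by rw [← hX4]; linarith [sq_nonneg Y, sq_nonneg Z])
  linarith [mul_le_mul_of_nonneg_left hYZ hM,
    mul_le_mul_of_nonneg_left hY (by positivity : 0 ≤ M * σ ^ 2 / 2),
    mul_le_mul_of_nonneg_left hX1 (by positivity : 0 ≤ (d + 2) * σ ^ 2)]

noncomputable def drift (α₁ β₁ γ σ p q d θ M X Y Z : ℝ) : ℝ :=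
  -θ * X ^ (θ + 2) * Z - 4 * α₁ * M * X ^ (p - 2) * Z + 2 * α₁ * γ * M * X ^ (q - 2) * Z
    - 8 * α₁ * X ^ p * Y * Z + 8 * α₁ * γ * X ^ q * Y * Z + 2 * M * Y * Z
    + M * σ ^ 2 * Y + 4 * X ^ (-2 : ℝ) * Z + 2 * (d + 2) * σ ^ 2 * X ^ (-2 : ℝ)
    - (d - 2 - θ) * θ * σ ^ 2 / 2 * X ^ (θ + 2)
    - 8 * (β₁ * X ^ p + β₁ * γ * X ^ q) * Y ^ 2
    - 4 * M * (β₁ * X ^ p + β₁ * γ * X ^ q) * Z ^ 2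

theorem exists_drift_le {α₁ β₁ γ σ p q d θ : ℝ} (hβ : 0 < β₁) (hγ : 0 < γ) (hσ : 0 < σ)
    (hp : 0 ≤ p) (hpq : p < q) (hθ : 0 < θ) (hθd : θ < d - 2) (hθq : θ < q - 2)
    (hqθ : q - 6 < θ) :
    ∃ M ≥ 1, ∃ K, ∀ X > 0, ∀ Y Z : ℝ,
      drift α₁ β₁ γ σ p q d θ M X Y Z ≤ K * (X ^ (-4 : ℝ) + Y ^ 2 + Z ^ 2 + 1) := by
  set c := (d - 2 - θ) * θ * σ ^ 2 / 2
  have hc : 0 < c := by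
    have : 0 < d - 2 - θ := by linarith
    positivity
  set M := 1 + 2 * α₁ ^ 2 / β₁ ^ 2 + θ ^ 2 / (c * β₁ * γ)
  have hα_nn : 0 ≤ 2 * α₁ ^ 2 / β₁ ^ 2 := by positivity
  have hθ_nn : 0 ≤ θ ^ 2 / (c * β₁ * γ) := by positivity
  have hM1 : 1 ≤ M := by linarith
  have hM0 : 0 ≤ M := by linarith
  have hMα : 2 * α₁ ^ 2 ≤ M * β₁ ^ 2 := (div_le_iff₀ (by positivity)).1 (by linarith)
  have hMθ : θ ^ 2 ≤ M * (c * β₁ * γ) := (div_le_iff₀ (by positivity)).1 (by linarith)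
  obtain ⟨C₁, hC₁, hp_tail⟩ := exists_mul_rpow_le_add (K := 4 * α₁ ^ 2 * M / β₁) (a := -4)
    (s := p - 4) (t := θ + 2) (ε := c / 4)
    (by positivity) (by linarith) (by linarith) (by positivity)
  obtain ⟨C₂, hC₂, hq_tail⟩ := exists_mul_rpow_le_add (K := α₁ ^ 2 * γ * M / β₁) (a := -4)
    (s := q - 4) (t := θ + 2) (ε := c / 4)
    (by positivity) (by linarith) (by linarith) (by positivity)
  refine ⟨M, hM1, θ ^ 2 / c + C₁ + C₂ + (M + M * σ ^ 2 / 2 + 2 + (d + 2) * σ ^ 2),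
    fun X hX Y Z => ?_⟩
  have hdamped := damped_terms_le (p := p) (q := q) (Y := Y) (Z := Z) hβ hγ hc hMα hMθ
    (by linarith) (by linarith) hX
  have hnoise := noise_terms_le (σ := σ) (Y := Y) (Z := Z) hM0 (by linarith : 0 ≤ d + 2) hX
  have hX4 := rpow_nonneg hX.le (-4)
  have hZ_le := mul_le_mul_of_nonneg_left
    (by linarith [sq_nonneg Y] : Z ^ 2 ≤ X ^ (-4 : ℝ) + Y ^ 2 + Z ^ 2 + 1)
    (by positivity : 0 ≤ θ ^ 2 / c)
  have htails_le := mul_le_mul_of_nonneg_left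
    (by nlinarith [sq_nonneg Y, sq_nonneg Z] :
      X ^ (-4 : ℝ) + 1 ≤ X ^ (-4 : ℝ) + Y ^ 2 + Z ^ 2 + 1)
    (add_nonneg hC₁ hC₂)
  have hcX_nn := mul_nonneg hc.le (rpow_nonneg hX.le (θ + 2))
  have hcX : (d - 2 - θ) * θ * σ ^ 2 / 2 * X ^ (θ + 2) = c * X ^ (θ + 2) := rfl
  unfold drift
  linarith [hp_tail X hX, hq_tail X hX]

theorem stmt_14_general (α₁ β₁ γ σ p q d θ : ℝ) (hβ : 0 < β₁) (hγ : 0 < γ)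
    (hσ : 0 < σ) (hp : 1 < p) (hpq : p < q)
    (hθ₁ : max (q - 6) 0 < θ) (hθ₂ : θ < min (d - 2) (q - 2)) :
    ∃ M > (0 : ℝ), ∃ M₂ > (0 : ℝ), ∀ X Y Z : ℝ, 0 < X → Y ≥ X ^ 2 * Z ^ 2 →
      -θ * X ^ (θ + 2) * Z - 4 * α₁ * M * X ^ (p - 2) * Z + 2 * α₁ * γ * M * X ^ (q - 2) * Z
        - 8 * α₁ * X ^ p * Y * Z + 8 * α₁ * γ * X ^ q * Y * Z + 2 * M * Y * Z
        + M * σ ^ 2 * Y + 4 * X ^ (-2 : ℝ) * Z + 2 * (d + 2) * σ ^ 2 * X ^ (-2 : ℝ)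
        - (d - 2 - θ) * θ * σ ^ 2 / 2 * X ^ (θ + 2)
        - 8 * (β₁ * X ^ p + β₁ * γ * X ^ q) * Y ^ 2
        - 4 * M * (β₁ * X ^ p + β₁ * γ * X ^ q) * Z ^ 2
      ≤ M₂ * (X ^ θ + X ^ (-4 : ℝ) + Y ^ 2 + M * Z ^ 2 + M) := by
  obtain ⟨hqθ, hθ⟩ := max_lt_iff.1 hθ₁
  obtain ⟨hθd, hθq⟩ := lt_min_iff.1 hθ₂
  obtain ⟨M, hM, K, hK⟩ :=
    exists_drift_le (α₁ := α₁) hβ hγ hσ (by linarith) hpq hθ hθd hθq hqθ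
  refine ⟨M, by linarith, max K 1, by positivity, fun X Y Z hX _ => (hK X hX Y Z).trans ?_⟩
  have hW : 0 ≤ X ^ (-4 : ℝ) + Y ^ 2 + Z ^ 2 + 1 := by positivity
  have hWV :
      X ^ (-4 : ℝ) + Y ^ 2 + Z ^ 2 + 1 ≤ X ^ θ + X ^ (-4 : ℝ) + Y ^ 2 + M * Z ^ 2 + M := by
    nlinarith [rpow_nonneg hX.le θ, sq_nonneg Z]
  calc K * (X ^ (-4 : ℝ) + Y ^ 2 + Z ^ 2 + 1)
      ≤ max K 1 * (X ^ (-4 : ℝ) + Y ^ 2 + Z ^ 2 + 1) :=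
        mul_le_mul_of_nonneg_right (le_max_left _ _) hW
    _ ≤ max K 1 * (X ^ θ + X ^ (-4 : ℝ) + Y ^ 2 + M * Z ^ 2 + M) :=
        mul_le_mul_of_nonneg_left hWV (by positivity)

theorem stmt_14 (α₁ β₁ γ σ p q d θ : ℝ) (hα : 0 < α₁) (hβ : 0 < β₁) (hγ : 0 < γ)
    (hσ : 0 < σ) (hp : 1 < p) (hpq : p < q) (hq : 2 < q) (hd : d > max (q - 4) 2)
    (hθ₁ : max (q - 6) 0 < θ) (hθ₂ : θ < min (d - 2) (q - 2)) :
    ∃ M > (0 : ℝ), ∃ M₂ > (0 : ℝ), ∀ X Y Z : ℝ, 0 < X → Y ≥ X ^ 2 * Z ^ 2 →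
      -θ * X ^ (θ + 2) * Z - 4 * α₁ * M * X ^ (p - 2) * Z + 2 * α₁ * γ * M * X ^ (q - 2) * Z
        - 8 * α₁ * X ^ p * Y * Z + 8 * α₁ * γ * X ^ q * Y * Z + 2 * M * Y * Z
        + M * σ ^ 2 * Y + 4 * X ^ (-2 : ℝ) * Z + 2 * (d + 2) * σ ^ 2 * X ^ (-2 : ℝ)
        - (d - 2 - θ) * θ * σ ^ 2 / 2 * X ^ (θ + 2)
        - 8 * (β₁ * X ^ p + β₁ * γ * X ^ q) * Y ^ 2
        - 4 * M * (β₁ * X ^ p + β₁ * γ * X ^ q) * Z ^ 2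
      ≤ M₂ * (X ^ θ + X ^ (-4 : ℝ) + Y ^ 2 + M * Z ^ 2 + M) :=
  stmt_14_general α₁ β₁ γ σ p q d θ hβ hγ hσ hp hpq hθ₁ hθ₂
end
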